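/- arXiv:2012.09396 — 5 statements merged into one kernel-verified Lean document; each statement's English description precedes it below -/
import Mathlib

section
/- Let X be a locally solid vector lattice and let T, S be linear operators on X with 0 ≤ T ≤ S. If S is a bb-bounded orthomorphism, then T is a bb-bounded orthomorphism. -/
open Filter Topology Bornology Function Pointwise

/-- A set in a lattice-ordered group is solid if it contains every element
dominated in absolute value by one of its members. -/
def Solid {X : Type*} [Lattice X] [AddCommGroup X] (S : Set X) : Prop :=
  ∀ x y : X, |x| ≤ |y| → y ∈ S → x ∈ S

/-- The linear topology is locally solid: it admits a base at zero of solid sets. -/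
def LocallySolid (X : Type*) [Lattice X] [AddCommGroup X] [TopologicalSpace X] : Prop :=
  ∀ V ∈ 𝓝 (0 : X), ∃ U ∈ 𝓝 (0 : X), Solid U ∧ U ⊆ V

/-- Archimedean property of a vector lattice. -/
def ArchimedeanVL (X : Type*) [Lattice X] [AddCommGroup X] : Prop :=
  ∀ x y : X, (∀ n : ℕ, n • x ≤ y) → x ≤ 0

/-- A band preserving operator. -/
def BandPreserving {X : Type*} [Lattice X] [AddCommGroup X] [Module ℝ X]
    (T : X →ₗ[ℝ] X) : Prop :=
  ∀ x y : X, |x| ⊓ |y| = 0 → |T x| ⊓ |y| = 0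

/-- An order bounded operator: it maps order intervals into order intervals. -/
def OrderBounded {X : Type*} [Lattice X] [AddCommGroup X] [Module ℝ X]
    (T : X →ₗ[ℝ] X) : Prop :=
  ∀ a b : X, ∃ c d : X, T '' Set.Icc a b ⊆ Set.Icc c d

/-- An orthomorphism: an order bounded band preserving operator. -/
def Orthomorphism {X : Type*} [Lattice X] [AddCommGroup X] [Module ℝ X]
    (T : X →ₗ[ℝ] X) : Prop :=
  OrderBounded T ∧ BandPreserving T

/-- An `nb`-bounded operator: it maps some zero neighborhood to a topologically
bounded set. -/
def NbBounded {X : Type*} [Lattice X] [AddCommGroup X] [Module ℝ X]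
    [TopologicalSpace X] (T : X →ₗ[ℝ] X) : Prop :=
  ∃ U ∈ 𝓝 (0 : X), IsVonNBounded ℝ (T '' U)

/-- A `bb`-bounded operator: it maps topologically bounded sets to bounded sets. -/
def BbBounded {X : Type*} [Lattice X] [AddCommGroup X] [Module ℝ X]
    [TopologicalSpace X] (T : X →ₗ[ℝ] X) : Prop :=
  ∀ B : Set X, IsVonNBounded ℝ B → IsVonNBounded ℝ (T '' B)

/-!
Positivity of `T` and `T ≤ S` give `|T x| ≤ T |x| ≤ S |x|`. This domination transfers band
preservation from `S` to `T`, and it places `T '' B` in the solid hull of `S` applied to the solid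
hull of `B`, so `bb`-boundedness transfers as soon as solid hulls of bounded sets are bounded.
For that, take a solid zero neighbourhood `U` inside a balanced one `W` and `n : ℕ` with
`A ⊆ n • U`: in a lattice-ordered group `|n • a| = n • |a|` and `n • a ≤ n • b` forces `a ≤ b`,
so the solid hull of `A` still lies in `n • U ⊆ n • W`, which `W` absorbs.
-/

namespace LatticeOrderedAddCommGroup

variable {X : Type*} [Lattice X] [AddCommGroup X] [AddLeftMono X]

theorem nsmul_inf_eq_zero {a b : X} (hab : a ⊓ b = 0) (n : ℕ) : n • a ⊓ b = 0 := by
  have ha : 0 ≤ a := hab ▸ inf_le_left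
  have hb : 0 ≤ b := hab ▸ inf_le_right
  induction n with
  | zero => simpa using hb
  | succ n ih =>
    have hle : (n + 1) • a ⊓ b ≤ a :=
      calc (n + 1) • a ⊓ b ≤ (n • a + a) ⊓ (b + a) :=
            inf_le_inf (succ_nsmul a n).le (le_add_of_nonneg_right ha)
        _ = a := by rw [← inf_add, ih, zero_add]
    exact le_antisymm (hab ▸ le_inf hle inf_le_right) (le_inf (nsmul_nonneg ha _) hb)

theorem nsmul_inf_nsmul_eq_zero {a b : X} (hab : a ⊓ b = 0) (n : ℕ) : n • a ⊓ n • b = 0 := by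
  rw [inf_comm]
  exact nsmul_inf_eq_zero (by rw [inf_comm, nsmul_inf_eq_zero hab]) n

theorem posPart_sub_of_inf_eq_zero {p q : X} (hpq : p ⊓ q = 0) : (p - q)⁺ = p := by
  have hsup : p ⊔ q = p + q := by simpa [hpq] using inf_add_sup p q
  rw [← add_right_inj q, ← sup_eq_add_posPart_sub, hsup, add_comm]

theorem posPart_nsmul (n : ℕ) (a : X) : (n • a)⁺ = n • a⁺ := by
  rw [← posPart_sub_negPart a, nsmul_sub, posPart_sub_of_inf_eq_zero, posPart_sub_negPart]
  exact nsmul_inf_nsmul_eq_zero (posPart_inf_negPart_eq_zero a) n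

theorem negPart_nsmul (n : ℕ) (a : X) : (n • a)⁻ = n • a⁻ := by
  rw [← posPart_neg, ← smul_neg, posPart_nsmul, posPart_neg]

theorem abs_nsmul (n : ℕ) (a : X) : |n • a| = n • |a| := by
  rw [← posPart_add_negPart, posPart_nsmul, negPart_nsmul, ← nsmul_add, posPart_add_negPart]

theorem le_of_nsmul_le_nsmul {n : ℕ} (hn : n ≠ 0) {a b : X} (h : n • a ≤ n • b) :
    a ≤ b := by
  have hnsmul : n • (b - a)⁻ = 0 := by
    rw [← negPart_nsmul, nsmul_sub, negPart_eq_zero]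
    exact sub_nonneg.2 h
  have hneg : (b - a)⁻ ≤ 0 := hnsmul ▸ le_self_nsmul (negPart_nonneg _) hn
  exact sub_nonneg.1 (negPart_eq_zero.1 (hneg.antisymm (negPart_nonneg _)))

theorem solidClosure_subset_natCast_smul {𝕜 : Type*} [DivisionRing 𝕜] [CharZero 𝕜]
    [Module 𝕜 X] {U A : Set X} (hU : IsSolid U) {n : ℕ} (hn : n ≠ 0)
    (hA : A ⊆ (n : 𝕜) • U) : solidClosure A ⊆ (n : 𝕜) • U := by
  rintro x ⟨y, hy, hxy⟩
  obtain ⟨u, hu, rfl⟩ := hA hy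
  -- The order need not be compatible with scalars, so `n⁻¹ • x` is compared with `u` via `n •`.
  have hx : (n : 𝕜) • (n : 𝕜)⁻¹ • x = x := smul_inv_smul₀ (Nat.cast_ne_zero.2 hn) x
  refine ⟨(n : 𝕜)⁻¹ • x, hU hu (le_of_nsmul_le_nsmul hn ?_), hx⟩
  rwa [← abs_nsmul, ← abs_nsmul, ← Nat.cast_smul_eq_nsmul 𝕜, ← Nat.cast_smul_eq_nsmul 𝕜,
    hx]

end LatticeOrderedAddCommGroup

open LatticeOrderedAddCommGroup

theorem LocallySolid.isVonNBounded_solidClosure {X : Type*} [Lattice X] [AddCommGroup X]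
    [AddLeftMono X] [Module ℝ X] [TopologicalSpace X] [ContinuousSMul ℝ X]
    (hls : LocallySolid X) {A : Set X} (hA : IsVonNBounded ℝ A) :
    IsVonNBounded ℝ (solidClosure A) := by
  rw [(nhds_basis_balanced ℝ X).isVonNBounded_iff]
  rintro W ⟨hW, hWbal⟩
  obtain ⟨U, hU, hUsolid, hUW⟩ := hls W hW
  obtain ⟨n, hAn, hn⟩ : ∃ n : ℕ, A ⊆ (n : ℝ) • U ∧ n ≠ 0 :=
    ((tendsto_natCast_atTop_cobounded.eventually (hA hU).eventually).and
      (eventually_ne_atTop 0)).exists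
  have hsub : solidClosure A ⊆ (n : ℝ) • W :=
    (solidClosure_subset_natCast_smul (fun _ hx _ hyx ↦ hUsolid _ _ hyx hx) hn hAn).trans
      (Set.smul_set_mono hUW)
  exact .of_norm ⟨n, fun c hc ↦ hsub.trans (hWbal.smul_mono (by simpa using hc))⟩

namespace LinearMap

variable {X : Type*} [Lattice X] [AddCommGroup X] [AddLeftMono X] [Module ℝ X]
  {T S : X →ₗ[ℝ] X}

theorem monotone_of_nonneg (hT : ∀ x, 0 ≤ x → 0 ≤ T x) : Monotone T := fun a b hab ↦ by
  simpa using hT (b - a) (sub_nonneg.2 hab)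

theorem orderBounded_of_nonneg (hT : ∀ x, 0 ≤ x → 0 ≤ T x) : OrderBounded T :=
  fun a b ↦ ⟨T a, T b, (monotone_of_nonneg hT).image_Icc_subset⟩

theorem abs_apply_le_apply_abs (hT : ∀ x, 0 ≤ x → 0 ≤ T x) (x : X) : |T x| ≤ T |x| :=
  abs_le'.2 ⟨monotone_of_nonneg hT (le_abs_self x),
    by simpa using monotone_of_nonneg hT (neg_le_abs x)⟩

theorem _root_.BandPreserving.of_abs_le_abs (hS : BandPreserving S) (h : ∀ x, |T x| ≤ |S (|x|)|) :
    BandPreserving T := fun x y hxy ↦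
  le_antisymm ((inf_le_inf_right _ (h x)).trans_eq (hS |x| y (by rwa [abs_abs])))
    (le_inf (abs_nonneg _) (abs_nonneg _))

theorem _root_.BbBounded.of_abs_le_abs [TopologicalSpace X] [ContinuousSMul ℝ X]
    (hls : LocallySolid X) (hS : BbBounded S) (h : ∀ x, |T x| ≤ |S (|x|)|) : BbBounded T :=
  fun B hB ↦ by
    refine (hls.isVonNBounded_solidClosure (hS _ (hls.isVonNBounded_solidClosure hB))).subset ?_
    rintro _ ⟨x, hx, rfl⟩
    exact ⟨S |x|, Set.mem_image_of_mem S ⟨x, hx, (abs_abs x).le⟩, h x⟩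

end LinearMap

theorem domination_bbBounded_general {X : Type*} [Lattice X] [AddCommGroup X] [Module ℝ X]
    [TopologicalSpace X] [ContinuousSMul ℝ X]
    [CovariantClass X X (· + ·) (· ≤ ·)]
    (hls : LocallySolid X)
    (T S : X →ₗ[ℝ] X)
    (hTpos : ∀ x : X, 0 ≤ x → 0 ≤ T x)
    (hTS : ∀ x : X, 0 ≤ x → T x ≤ S x)
    (hS : Orthomorphism S) (hSbb : BbBounded S) :
    Orthomorphism T ∧ BbBounded T := by
  have hdom : ∀ x, |T x| ≤ |S (|x|)| := fun x ↦
    calc |T x| ≤ T |x| := LinearMap.abs_apply_le_apply_abs hTpos x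
      _ ≤ S |x| := hTS _ (abs_nonneg x)
      _ ≤ |S (|x|)| := le_abs_self _
  exact ⟨⟨LinearMap.orderBounded_of_nonneg hTpos, hS.2.of_abs_le_abs hdom⟩,
    hSbb.of_abs_le_abs hls hdom⟩

/-- domination for `bb`-bounded orthomorphisms: if `0 ≤ T ≤ S` and `S`
is a `bb`-bounded orthomorphism, then so is `T`. -/
theorem domination_bbBounded {X : Type*} [Lattice X] [AddCommGroup X] [Module ℝ X]
    [TopologicalSpace X] [IsTopologicalAddGroup X] [ContinuousSMul ℝ X]
    [CovariantClass X X (· + ·) (· ≤ ·)]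
    (hls : LocallySolid X)
    (T S : X →ₗ[ℝ] X)
    (hTpos : ∀ x : X, 0 ≤ x → 0 ≤ T x)
    (hTS : ∀ x : X, 0 ≤ x → T x ≤ S x)
    (hS : Orthomorphism S) (hSbb : BbBounded S) :
    Orthomorphism T ∧ BbBounded T :=
  domination_bbBounded_general hls T S hTpos hTS hS hSbb
end

section
/- Let X be a locally solid vector lattice and let T, S be linear operators on X with 0 ≤ T ≤ S. If S is a continuous orthomorphism, then T is a continuous orthomorphism. -/
open Filter Topology Bornology Function Pointwise

/-!
A positive operator `T ≤ S` satisfies `|T x| ≤ T |x| ≤ S |x|`. Band preservation passes from `S`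
to `T` through this pointwise domination, and so does continuity at zero once the topology has a
base of solid neighbourhoods: if `S |x|` lies in a solid neighbourhood `W`, so does `T x`.
Order boundedness holds for every positive operator, since it maps `[a, b]` into `[T a, T b]`.
-/

theorem abs_map_le_map_abs {X Y F : Type*} [Lattice X] [AddCommGroup X] [Lattice Y]
    [AddCommGroup Y] [AddLeftMono Y] [FunLike F X Y] [AddMonoidHomClass F X Y] {f : F}
    (hf : Monotone f) (x : X) : |f x| ≤ f |x| :=
  abs_le'.mpr ⟨hf (le_abs_self x), by simpa only [map_neg] using hf (neg_le_abs x)⟩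

theorem Solid.abs_mem {X : Type*} [Lattice X] [AddCommGroup X] [AddLeftMono X] {U : Set X}
    (hU : Solid U) {x : X} (hx : x ∈ U) : |x| ∈ U :=
  hU |x| x (abs_abs x).le hx

theorem continuous_of_abs_map_le_map_abs {X Y F : Type*} [Lattice X] [AddCommGroup X]
    [AddLeftMono X] [TopologicalSpace X] [IsTopologicalAddGroup X] [Lattice Y] [AddCommGroup Y]
    [TopologicalSpace Y] [ContinuousAdd Y] [FunLike F X Y] [AddMonoidHomClass F X Y]
    (hX : LocallySolid X) (hY : LocallySolid Y) {f g : F} (hg : Continuous g)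
    (hfg : ∀ x, |f x| ≤ g |x|) : Continuous f := by
  refine continuous_of_continuousAt_zero f ?_
  rw [ContinuousAt, map_zero, tendsto_def]
  intro V hV
  obtain ⟨W, hW, hW_solid, hWV⟩ := hY V hV
  have hgW : g ⁻¹' W ∈ 𝓝 (0 : X) := hg.tendsto' 0 0 (map_zero g) hW
  obtain ⟨U, hU, hU_solid, hUW⟩ := hX _ hgW
  refine mem_of_superset hU fun x hx ↦ ?_
  exact hWV (hW_solid (f x) (g |x|) ((hfg x).trans (le_abs_self _)) (hUW (hU_solid.abs_mem hx)))

section Orthomorphism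

variable {X : Type*} [Lattice X] [AddCommGroup X] [Module ℝ X]

theorem orderBounded_of_monotone {T : X →ₗ[ℝ] X} (hT : Monotone T) : OrderBounded T :=
  fun a b ↦ ⟨T a, T b, Set.image_subset_iff.mpr fun _ hx ↦ ⟨hT hx.1, hT hx.2⟩⟩

theorem BandPreserving.of_abs_map_le [AddLeftMono X] {T S : X →ₗ[ℝ] X}
    (hS : BandPreserving S) (hTS : ∀ x, |T x| ≤ S |x|) : BandPreserving T := by
  intro x y hxy
  have hSxy : abs (S |x|) ⊓ |y| = 0 := hS |x| y (by rwa [abs_abs])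
  refine le_antisymm ?_ (le_inf (abs_nonneg _) (abs_nonneg _))
  calc |T x| ⊓ |y| ≤ abs (S |x|) ⊓ |y| := inf_le_inf_right _ ((hTS x).trans (le_abs_self _))
    _ = 0 := hSxy

end Orthomorphism

theorem domination_continuous_general {X : Type*} [Lattice X] [AddCommGroup X] [Module ℝ X]
    [TopologicalSpace X] [IsTopologicalAddGroup X]
    [CovariantClass X X (· + ·) (· ≤ ·)]
    (hls : LocallySolid X)
    (T S : X →ₗ[ℝ] X)
    (hTpos : ∀ x : X, 0 ≤ x → 0 ≤ T x)
    (hTS : ∀ x : X, 0 ≤ x → T x ≤ S x)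
    (hS : Orthomorphism S) (hSc : Continuous S) :
    Orthomorphism T ∧ Continuous T := by
  have : IsOrderedAddMonoid X := { add_le_add_left := fun _ _ h c ↦ add_le_add_left h c }
  have hT_mono : Monotone T := (monotone_iff_map_nonneg T).mpr hTpos
  have hT_le_S : ∀ x, |T x| ≤ S |x| :=
    fun x ↦ (abs_map_le_map_abs hT_mono x).trans (hTS _ (abs_nonneg x))
  exact ⟨⟨orderBounded_of_monotone hT_mono, hS.2.of_abs_map_le hT_le_S⟩,
    continuous_of_abs_map_le_map_abs hls hls hSc hT_le_S⟩

/-- domination for continuous orthomorphisms: if `0 ≤ T ≤ S` and `S`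
is a continuous orthomorphism, then so is `T`. -/
theorem domination_continuous {X : Type*} [Lattice X] [AddCommGroup X] [Module ℝ X]
    [TopologicalSpace X] [IsTopologicalAddGroup X] [ContinuousSMul ℝ X]
    [CovariantClass X X (· + ·) (· ≤ ·)]
    (hls : LocallySolid X)
    (T S : X →ₗ[ℝ] X)
    (hTpos : ∀ x : X, 0 ≤ x → 0 ≤ T x)
    (hTS : ∀ x : X, 0 ≤ x → T x ≤ S x)
    (hS : Orthomorphism S) (hSc : Continuous S) :
    Orthomorphism T ∧ Continuous T :=
  domination_continuous_general hls T S hTpos hTS hS hSc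
end

section
/- Let X, Y be locally solid vector lattices with Y Hausdorff, and let (T_α) be a net of disjointness preserving linear operators from X to Y converging pointwise (in the topology of Y) to a linear operator T. Then T is disjointness preserving. -/
open Filter Topology Bornology Function Pointwise

/-- A disjointness preserving operator between vector lattices. -/
def DisjointnessPreserving {X Y : Type*} [Lattice X] [AddCommGroup X] [Module ℝ X]
    [Lattice Y] [AddCommGroup Y] [Module ℝ Y] (T : X →ₗ[ℝ] Y) : Prop :=
  ∀ x y : X, |x| ⊓ |y| = 0 → |T x| ⊓ |T y| = 0

/-!
In a locally solid space, `|f| ≤ |g|` with `g → 0` forces `f → 0`. Together with the Birkhoff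
inequality `|a ⊓ c - b ⊓ d| ≤ |a - b| + |c - d|` and `||a| - |b|| ≤ |a - b|` this makes the
lattice operations continuous, so `|T x| ⊓ |T y|` is the limit of `|T_α x| ⊓ |T_α y|`, which is
constantly `0` when `x` and `y` are disjoint; the limit is `0` because `Y` is Hausdorff.
-/

theorem abs_inf_sub_inf_le_abs_add_abs {α : Type*} [Lattice α] [AddCommGroup α] [AddLeftMono α]
    (a b c d : α) : |a ⊓ c - b ⊓ d| ≤ |a - b| + |c - d| :=
  calc |a ⊓ c - b ⊓ d| = |(a ⊓ c - b ⊓ c) + (b ⊓ c - b ⊓ d)| := by rw [sub_add_sub_cancel]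
    _ ≤ |a ⊓ c - b ⊓ c| + |b ⊓ c - b ⊓ d| := abs_add_le _ _
    _ ≤ |a - b| + |c - d| :=
      add_le_add (abs_inf_sub_inf_le_abs a b c)
        (by simpa only [inf_comm b] using abs_inf_sub_inf_le_abs c d b)

namespace LocallySolid

variable {Y ι : Type*} [Lattice Y] [AddCommGroup Y] [TopologicalSpace Y] {l : Filter ι}

theorem tendsto_nhds_zero_of_abs_le (hY : LocallySolid Y) {f g : ι → Y}
    (hg : Tendsto g l (𝓝 0)) (hfg : ∀ᶠ a in l, |f a| ≤ |g a|) : Tendsto f l (𝓝 0) := by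
  intro V hV
  obtain ⟨U, hU, hU_solid, hUV⟩ := hY V hV
  exact (hfg.and (hg hU)).mono fun a ⟨hfga, hga⟩ => hUV (hU_solid _ _ hfga hga)

variable [IsTopologicalAddGroup Y] [AddLeftMono Y]

theorem tendsto_abs (hY : LocallySolid Y) {u : ι → Y} {x : Y} (hu : Tendsto u l (𝓝 x)) :
    Tendsto (fun a => |u a|) l (𝓝 |x|) := by
  rw [← tendsto_sub_nhds_zero_iff] at hu ⊢
  exact hY.tendsto_nhds_zero_of_abs_le hu (.of_forall fun a => abs_abs_sub_abs_le (u a) x)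

theorem tendsto_inf (hY : LocallySolid Y) {u v : ι → Y} {x y : Y}
    (hu : Tendsto u l (𝓝 x)) (hv : Tendsto v l (𝓝 y)) :
    Tendsto (fun a => u a ⊓ v a) l (𝓝 (x ⊓ y)) := by
  rw [← tendsto_sub_nhds_zero_iff] at hu hv ⊢
  have hsum : Tendsto (fun a => |u a - x| + |v a - y|) l (𝓝 0) := by
    simpa only [abs_zero, add_zero] using (hY.tendsto_abs hu).add (hY.tendsto_abs hv)
  refine hY.tendsto_nhds_zero_of_abs_le hsum (.of_forall fun a => ?_)
  calc |u a ⊓ v a - x ⊓ y| ≤ |u a - x| + |v a - y| := abs_inf_sub_inf_le_abs_add_abs _ _ _ _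
    _ = |(|u a - x| + |v a - y|)| := (abs_of_nonneg (by positivity)).symm

end LocallySolid

theorem pointwise_limit_disjointnessPreserving_general {X Y : Type*}
    [Lattice X] [AddCommGroup X] [Module ℝ X]
    [Lattice Y] [AddCommGroup Y] [Module ℝ Y] [TopologicalSpace Y]
    [IsTopologicalAddGroup Y]
    [CovariantClass Y Y (· + ·) (· ≤ ·)] [T2Space Y]
    (hlsY : LocallySolid Y)
    {ι : Type*} (l : Filter ι) [l.NeBot]
    (Tnet : ι → (X →ₗ[ℝ] Y))
    (hdp : ∀ a : ι, DisjointnessPreserving (Tnet a))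
    (T : X →ₗ[ℝ] Y)
    (hconv : ∀ x : X, Tendsto (fun a => Tnet a x) l (𝓝 (T x))) :
    DisjointnessPreserving T := by
  intro x y hxy
  have hlim := hlsY.tendsto_inf (hlsY.tendsto_abs (hconv x)) (hlsY.tendsto_abs (hconv y))
  exact tendsto_nhds_unique hlim (tendsto_const_nhds.congr fun a => (hdp a x y hxy).symm)

/-- a pointwise limit of disjointness preserving operators into a
Hausdorff locally solid vector lattice is disjointness preserving. -/
theorem pointwise_limit_disjointnessPreserving {X Y : Type*}
    [Lattice X] [AddCommGroup X] [Module ℝ X] [TopologicalSpace X]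
    [Lattice Y] [AddCommGroup Y] [Module ℝ Y] [TopologicalSpace Y]
    [IsTopologicalAddGroup Y] [ContinuousSMul ℝ Y]
    [CovariantClass Y Y (· + ·) (· ≤ ·)] [T2Space Y]
    (hlsX : LocallySolid X) (hlsY : LocallySolid Y)
    {ι : Type*} (l : Filter ι) [l.NeBot]
    (Tnet : ι → (X →ₗ[ℝ] Y))
    (hdp : ∀ a : ι, DisjointnessPreserving (Tnet a))
    (T : X →ₗ[ℝ] Y)
    (hconv : ∀ x : X, Tendsto (fun a => Tnet a x) l (𝓝 (T x))) :
    DisjointnessPreserving T :=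
  pointwise_limit_disjointnessPreserving_general hlsY l Tnet hdp T hconv
end

section
/- Let X be a Hausdorff locally solid vector lattice and (T_α) a net of band preserving linear operators on X converging pointwise to a linear operator T. Then T is band preserving. -/
open Filter Topology Bornology Function Pointwise

/-!
The disjoint complement `{z | |z| ⊓ |y| = 0}` is closed: `z ↦ |z| ⊓ |y|` satisfies
`| |u| ⊓ |y| - |v| ⊓ |y| | ≤ |u - v|`, and in a locally solid topology such lattice contractions
are continuous. It contains every `T_α x`, hence also their limit `T x`.
-/

namespace LocallySolid

variable {X : Type*} [Lattice X] [AddCommGroup X] [TopologicalSpace X] [IsTopologicalAddGroup X]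

theorem continuous_of_abs_sub_le (hls : LocallySolid X) {f : X → X}
    (hf : ∀ u v, |f u - f v| ≤ |u - v|) : Continuous f := by
  refine continuous_iff_continuousAt.2 fun u => ?_
  rw [ContinuousAt, ← tendsto_sub_nhds_zero_iff]
  intro V hV
  rw [mem_map]
  obtain ⟨U, hU, hUsolid, hUV⟩ := hls V hV
  have hsub : Tendsto (fun v => v - u) (𝓝 u) (𝓝 0) := tendsto_sub_nhds_zero_iff.2 tendsto_id
  filter_upwards [hsub.eventually_mem hU] with v hv
  exact hUV (hUsolid _ _ (hf v u) hv)

variable [AddLeftMono X]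

theorem continuous_abs_inf (hls : LocallySolid X) (c : X) : Continuous fun z : X => |z| ⊓ c :=
  hls.continuous_of_abs_sub_le fun u v =>
    (abs_inf_sub_inf_le_abs _ _ _).trans (abs_abs_sub_abs_le u v)

theorem isClosed_setOf_abs_inf_eq_zero [T2Space X] (hls : LocallySolid X) (y : X) :
    IsClosed {z : X | |z| ⊓ |y| = 0} :=
  isClosed_eq (hls.continuous_abs_inf |y|) continuous_const

end LocallySolid

theorem pointwise_limit_bandPreserving_general {X : Type*}
    [Lattice X] [AddCommGroup X] [Module ℝ X] [TopologicalSpace X]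
    [IsTopologicalAddGroup X]
    [CovariantClass X X (· + ·) (· ≤ ·)] [T2Space X]
    (hls : LocallySolid X)
    {ι : Type*} (l : Filter ι) [l.NeBot]
    (Tnet : ι → (X →ₗ[ℝ] X))
    (hbp : ∀ a : ι, BandPreserving (Tnet a))
    (T : X →ₗ[ℝ] X)
    (hconv : ∀ x : X, Tendsto (fun a => Tnet a x) l (𝓝 (T x))) :
    BandPreserving T := fun x y hxy =>
  (hls.isClosed_setOf_abs_inf_eq_zero y).mem_of_tendsto (hconv x)
    (Eventually.of_forall fun a => hbp a x y hxy)

/-- a pointwise limit of band preserving operators on a Hausdorff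
locally solid vector lattice is band preserving. -/
theorem pointwise_limit_bandPreserving {X : Type*}
    [Lattice X] [AddCommGroup X] [Module ℝ X] [TopologicalSpace X]
    [IsTopologicalAddGroup X] [ContinuousSMul ℝ X]
    [CovariantClass X X (· + ·) (· ≤ ·)] [T2Space X]
    (hls : LocallySolid X)
    {ι : Type*} (l : Filter ι) [l.NeBot]
    (Tnet : ι → (X →ₗ[ℝ] X))
    (hbp : ∀ a : ι, BandPreserving (Tnet a))
    (T : X →ₗ[ℝ] X)
    (hconv : ∀ x : X, Tendsto (fun a => Tnet a x) l (𝓝 (T x))) :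
    BandPreserving T :=
  pointwise_limit_bandPreserving_general hls l Tnet hbp T hconv
end

section
/- Let X be a locally solid f-algebra with multiplication unit e such that multiplication is continuous at zero, and suppose Orth_b(X) with the topology of uniform convergence on bounded sets has the Levi property. Then X has the Levi property. -/
open Filter Topology Bornology Function Pointwise

/-- The Levi property: every topologically bounded upward directed set of positive
elements has a supremum. -/
def LeviProperty (X : Type*) [Lattice X] [AddCommGroup X] [Module ℝ X]
    [TopologicalSpace X] : Prop :=
  ∀ B : Set X, B.Nonempty → IsVonNBounded ℝ B → (∀ x ∈ B, (0 : X) ≤ x) →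
    DirectedOn (· ≤ ·) B → ∃ b : X, IsLUB B b

/-! Left multiplication `b ↦ T_b` maps the positive cone of `X` into `Orth_b(X)` preserving
and reflecting the order (evaluate at the unit, which is positive in an `f`-algebra), and
since products of bounded sets are bounded, a bounded set `B` gives a family `{T_b | b ∈ B}`
that is uniformly bounded on bounded sets. If `B ⊆ X₊` is bounded and directed, the supremum
`S` of this family in `Orth_b(X)` yields `sup B = S 1`: each `b = T_b 1 ≤ S 1`, and an upper
bound `c` of `B` gives an upper bound `T_c` of the family, so `S 1 ≤ T_c 1 = c`. -/

section BoundedProducts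

variable {𝕜 X : Type*} [NontriviallyNormedField 𝕜] [NonUnitalNonAssocRing X]
  [Module 𝕜 X] [IsScalarTower 𝕜 X X] [SMulCommClass 𝕜 X X]
  [TopologicalSpace X] [ContinuousSMul 𝕜 X]

theorem isVonNBounded_mul
    (hmc : ∀ V ∈ 𝓝 (0 : X), ∃ U ∈ 𝓝 (0 : X), ∀ u ∈ U, ∀ x ∈ U, u * x ∈ V)
    {A B : Set X} (hA : IsVonNBounded 𝕜 A) (hB : IsVonNBounded 𝕜 B) :
    IsVonNBounded 𝕜 (A * B) := by
  intro V hV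
  obtain ⟨W, ⟨hW, hWbal⟩, hWV⟩ := (nhds_basis_balanced 𝕜 X).mem_iff.mp hV
  obtain ⟨U, hU, hUW⟩ := hmc W hW
  obtain ⟨r, hAr⟩ := (hA hU).exists
  obtain ⟨s, hBs⟩ := (hB hU).exists
  have hABW : A * B ⊆ (r * s) • W := by
    rintro _ ⟨_, ha, _, hb, rfl⟩
    obtain ⟨u, hu, rfl⟩ := hAr ha
    obtain ⟨w, hw, rfl⟩ := hBs hb
    show (r • u) * (s • w) ∈ (r * s) • W
    rw [smul_mul_assoc, mul_smul_comm, smul_smul]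
    exact Set.smul_mem_smul_set (hUW u hu w hw)
  exact Absorbs.of_norm ⟨‖r * s‖, fun c hc =>
    hABW.trans ((hWbal.smul_mono hc).trans (Set.smul_set_mono hWV))⟩

theorem isVonNBounded_image_mulLeft
    (hmc : ∀ V ∈ 𝓝 (0 : X), ∃ U ∈ 𝓝 (0 : X), ∀ u ∈ U, ∀ x ∈ U, u * x ∈ V)
    (b : X) {B : Set X} (hB : IsVonNBounded 𝕜 B) : IsVonNBounded 𝕜 ((b * ·) '' B) := by
  rw [← Set.singleton_mul]
  exact isVonNBounded_mul hmc (isVonNBounded_singleton b) hB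

end BoundedProducts

theorem exists_pos_forall_image_mulLeft_subset {X : Type*} [NonUnitalNonAssocRing X]
    [Module ℝ X] [IsScalarTower ℝ X X] [SMulCommClass ℝ X X]
    [TopologicalSpace X] [ContinuousSMul ℝ X]
    (hmc : ∀ V ∈ 𝓝 (0 : X), ∃ U ∈ 𝓝 (0 : X), ∀ u ∈ U, ∀ x ∈ U, u * x ∈ V)
    {A B : Set X} (hA : IsVonNBounded ℝ A) (hB : IsVonNBounded ℝ B) {V : Set X}
    (hV : V ∈ 𝓝 (0 : X)) : ∃ γ : ℝ, 0 < γ ∧ ∀ a ∈ A, (a * ·) '' B ⊆ γ • V := by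
  obtain ⟨γ, hγ, hABV⟩ := (isVonNBounded_mul hmc hA hB hV).exists_pos
  refine ⟨γ, hγ, fun a ha => ?_⟩
  rintro _ ⟨x, hx, rfl⟩
  exact hABV γ (by rw [Real.norm_of_nonneg hγ.le]) (Set.mul_mem_mul ha hx)

section FAlgebra

variable {X : Type*} [Ring X] [Lattice X]

theorem mul_eq_zero_of_inf_eq_zero
    (hfalg : ∀ x y : X, x ⊓ y = 0 → ∀ z : X, 0 ≤ z → (z * x) ⊓ y = 0 ∧ (x * z) ⊓ y = 0)
    {x y : X} (hx : 0 ≤ x) (hy : 0 ≤ y) (h : x ⊓ y = 0) : x * y = 0 := by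
  have hxy_y : y ⊓ (x * y) = 0 := by rw [inf_comm]; exact (hfalg x y h y hy).2
  simpa using (hfalg y (x * y) hxy_y x hx).1

theorem zero_le_one_of_fAlgebra [IsOrderedAddMonoid X]
    (hfalg : ∀ x y : X, x ⊓ y = 0 → ∀ z : X, 0 ≤ z → (z * x) ⊓ y = 0 ∧ (x * z) ⊓ y = 0)
    (hmulpos : ∀ x y : X, 0 ≤ x → 0 ≤ y → 0 ≤ x * y) : (0 : X) ≤ 1 := by
  have hdisj : (1 : X)⁺ * (1 : X)⁻ = 0 := mul_eq_zero_of_inf_eq_zero hfalg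
    (posPart_nonneg 1) (negPart_nonneg 1) (posPart_inf_negPart_eq_zero 1)
  have hneg : (1 : X)⁻ = -((1 : X)⁻ * (1 : X)⁻) :=
    calc (1 : X)⁻ = ((1 : X)⁺ - (1 : X)⁻) * (1 : X)⁻ := by rw [posPart_sub_negPart, one_mul]
      _ = -((1 : X)⁻ * (1 : X)⁻) := by rw [sub_mul, hdisj, zero_sub]
  have hneg_zero : (1 : X)⁻ = 0 := le_antisymm
    (hneg ▸ neg_nonpos.mpr (hmulpos _ _ (negPart_nonneg 1) (negPart_nonneg 1)))
    (negPart_nonneg 1)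
  rw [← posPart_sub_negPart (1 : X), hneg_zero, sub_zero]
  exact posPart_nonneg 1

variable [Module ℝ X] [SMulCommClass ℝ X X] [IsOrderedRing X]

theorem orthomorphism_mulLeft
    (hfalg : ∀ x y : X, x ⊓ y = 0 → ∀ z : X, 0 ≤ z → (z * x) ⊓ y = 0)
    {b : X} (hb : 0 ≤ b) : Orthomorphism (LinearMap.mulLeft ℝ b) := by
  refine ⟨fun a c => ⟨b * a, b * c, ?_⟩, fun x y hxy => ?_⟩
  · rintro _ ⟨x, ⟨hax, hxc⟩, rfl⟩
    exact ⟨mul_le_mul_of_nonneg_left hax hb, mul_le_mul_of_nonneg_left hxc hb⟩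
  · have habs : |b * x| ≤ b * |x| := abs_le'.mpr
      ⟨mul_le_mul_of_nonneg_left (le_abs_self x) hb,
        by rw [← mul_neg]; exact mul_le_mul_of_nonneg_left (neg_le_abs x) hb⟩
    refine le_antisymm ?_ (le_inf (abs_nonneg _) (abs_nonneg _))
    exact (hfalg |x| |y| hxy b hb).le.trans' (inf_le_inf_right _ habs)

end FAlgebra

theorem levi_transfer_general {X : Type*} [Ring X] [Lattice X] [Module ℝ X]
    [IsScalarTower ℝ X X] [SMulCommClass ℝ X X]
    [TopologicalSpace X] [ContinuousSMul ℝ X]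
    [CovariantClass X X (· + ·) (· ≤ ·)]
    (hfalg : ∀ x y : X, x ⊓ y = 0 → ∀ z : X, 0 ≤ z → (z * x) ⊓ y = 0 ∧ (x * z) ⊓ y = 0)
    (hmulpos : ∀ x y : X, 0 ≤ x → 0 ≤ y → 0 ≤ x * y)
    (hmc : ∀ V ∈ 𝓝 (0 : X), ∃ U ∈ 𝓝 (0 : X), ∀ u ∈ U, ∀ x ∈ U, u * x ∈ V)
    (hleviOrth : ∀ D : Set (X →ₗ[ℝ] X), D.Nonempty →
      (∀ T ∈ D, Orthomorphism T ∧ BbBounded T) →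
      (∀ T ∈ D, ∀ x : X, 0 ≤ x → 0 ≤ T x) →
      DirectedOn (fun T S : X →ₗ[ℝ] X => ∀ x : X, 0 ≤ x → T x ≤ S x) D →
      (∀ B : Set X, IsVonNBounded ℝ B → ∀ V ∈ 𝓝 (0 : X),
        ∃ γ : ℝ, 0 < γ ∧ ∀ T ∈ D, T '' B ⊆ γ • V) →
      ∃ S : X →ₗ[ℝ] X, Orthomorphism S ∧ BbBounded S ∧
        (∀ T ∈ D, ∀ x : X, 0 ≤ x → T x ≤ S x) ∧
        (∀ R : X →ₗ[ℝ] X, Orthomorphism R → BbBounded R →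
          (∀ T ∈ D, ∀ x : X, 0 ≤ x → T x ≤ R x) → ∀ x : X, 0 ≤ x → S x ≤ R x)) :
    LeviProperty X := by
  intro B ⟨b₀, hb₀⟩ hB hBpos hBdir
  have : IsOrderedAddMonoid X := { add_le_add_left := fun _ _ h c => by gcongr }
  have : ZeroLEOneClass X := ⟨zero_le_one_of_fAlgebra hfalg hmulpos⟩
  have : IsOrderedRing X := .of_mul_nonneg hmulpos
  have hT {b : X} (hb : 0 ≤ b) : Orthomorphism (LinearMap.mulLeft ℝ b) ∧
      BbBounded (LinearMap.mulLeft ℝ b) :=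
    ⟨orthomorphism_mulLeft (fun x y h z hz => (hfalg x y h z hz).1) hb,
      fun _ hB' => isVonNBounded_image_mulLeft hmc b hB'⟩
  have hle {b c : X} (h : b ≤ c) (x : X) (hx : 0 ≤ x) :
      LinearMap.mulLeft ℝ b x ≤ LinearMap.mulLeft ℝ c x :=
    mul_le_mul_of_nonneg_right h hx
  obtain ⟨S, -, -, hSub, hSmin⟩ := hleviOrth (LinearMap.mulLeft ℝ '' B) ⟨_, b₀, hb₀, rfl⟩
    (Set.forall_mem_image.2 fun b hb => hT (hBpos b hb))
    (Set.forall_mem_image.2 fun b hb x hx => mul_nonneg (hBpos b hb) hx)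
    (hBdir.mono_comp fun _ _ => hle)
    (fun B' hB' V hV => (exists_pos_forall_image_mulLeft_subset hmc hB hB' hV).imp
      fun _ ⟨hγ, h⟩ => ⟨hγ, Set.forall_mem_image.2 h⟩)
  refine ⟨S 1, fun b hb => ?_, fun c hc => ?_⟩
  · simpa using hSub _ ⟨b, hb, rfl⟩ 1 zero_le_one
  · have hc₀ : 0 ≤ c := (hBpos b₀ hb₀).trans (hc hb₀)
    simpa using hSmin _ (hT hc₀).1 (hT hc₀).2
      (Set.forall_mem_image.2 fun b hb => hle (hc hb)) 1 zero_le_one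

/-- if `X` is a locally solid `f`-algebra with unit whose
multiplication is continuous at zero and the space `Orth_b(X)` of `bb`-bounded
orthomorphisms (with the topology of uniform convergence on bounded sets and the
pointwise order) has the Levi property, then `X` has the Levi property. -/
theorem levi_transfer {X : Type*} [Ring X] [Lattice X] [Module ℝ X]
    [IsScalarTower ℝ X X] [SMulCommClass ℝ X X]
    [TopologicalSpace X] [IsTopologicalAddGroup X] [ContinuousSMul ℝ X]
    [CovariantClass X X (· + ·) (· ≤ ·)]
    (hls : LocallySolid X)
    (hfalg : ∀ x y : X, x ⊓ y = 0 → ∀ z : X, 0 ≤ z → (z * x) ⊓ y = 0 ∧ (x * z) ⊓ y = 0)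
    (hmulpos : ∀ x y : X, 0 ≤ x → 0 ≤ y → 0 ≤ x * y)
    (hmc : ∀ V ∈ 𝓝 (0 : X), ∃ U ∈ 𝓝 (0 : X), ∀ u ∈ U, ∀ x ∈ U, u * x ∈ V)
    (hleviOrth : ∀ D : Set (X →ₗ[ℝ] X), D.Nonempty →
      (∀ T ∈ D, Orthomorphism T ∧ BbBounded T) →
      (∀ T ∈ D, ∀ x : X, 0 ≤ x → 0 ≤ T x) →
      DirectedOn (fun T S : X →ₗ[ℝ] X => ∀ x : X, 0 ≤ x → T x ≤ S x) D →
      (∀ B : Set X, IsVonNBounded ℝ B → ∀ V ∈ 𝓝 (0 : X),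
        ∃ γ : ℝ, 0 < γ ∧ ∀ T ∈ D, T '' B ⊆ γ • V) →
      ∃ S : X →ₗ[ℝ] X, Orthomorphism S ∧ BbBounded S ∧
        (∀ T ∈ D, ∀ x : X, 0 ≤ x → T x ≤ S x) ∧
        (∀ R : X →ₗ[ℝ] X, Orthomorphism R → BbBounded R →
          (∀ T ∈ D, ∀ x : X, 0 ≤ x → T x ≤ R x) → ∀ x : X, 0 ≤ x → S x ≤ R x)) :
    LeviProperty X :=
  levi_transfer_general hfalg hmulpos hmc hleviOrth
end
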